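/- Every symmetric 2×2 matrix A with nonnegative integer entries that is completely positive admits an integral cp-factorization: A = Σ_{i=1}^m x_i x_i^T with x_i ∈ ℤ^2_{≥0}. -/

import Mathlib

open Matrix

private lemma sum_map_add_aux (l : List (ℤ × ℤ)) (f g : ℤ × ℤ → ℤ) :
    (l.map (fun p => f p + g p)).sum = (l.map f).sum + (l.map g).sum := by
  induction l with
  | nil => simp
  | cons h t ih => simp [ih]; ring

private lemma fin_sum_list (l : List (ℤ × ℤ)) (f : ℤ × ℤ → ℤ) :
    (∑ i : Fin l.length, f (l.get i)) = (l.map f).sum := by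
  induction l with
  | nil => simp
  | cons h t ih =>
    show ∑ i : Fin (t.length + 1), f ((h :: t).get i) = _
    rw [Fin.sum_univ_succ]
    simp [ih]

private lemma key_lemma : ∀ (n : ℕ) (a b d : ℤ), a + b + d ≤ (n : ℤ) → 0 ≤ a → 0 ≤ b → 0 ≤ d →
    b * b ≤ a * d →
    ∃ l : List (ℤ × ℤ), (∀ p ∈ l, 0 ≤ p.1 ∧ 0 ≤ p.2) ∧
      (l.map fun p => p.1 * p.1).sum = a ∧
      (l.map fun p => p.1 * p.2).sum = b ∧
      (l.map fun p => p.2 * p.2).sum = d := by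
  intro n
  induction n using Nat.strong_induction_on with
  | _ n IH =>
  intro a b d hsum ha hb hd hdet
  rcases eq_or_lt_of_le hb with hb0 | hb1
  · -- b = 0 : diagonal case
    subst hb0
    refine ⟨List.replicate a.toNat (1, 0) ++ List.replicate d.toNat (0, 1), ?_, ?_, ?_, ?_⟩
    · intro p hp
      rcases List.mem_append.mp hp with h | h <;>
      · have := List.eq_of_mem_replicate h
        subst this
        norm_num
    · simp [List.map_replicate, List.sum_replicate, Int.toNat_of_nonneg ha]
    · simp [List.map_replicate, List.sum_replicate]
    · simp [List.map_replicate, List.sum_replicate, Int.toNat_of_nonneg hd]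
  · -- b ≥ 1
    have hn : 1 ≤ n := by
      by_contra h
      push_neg at h
      interval_cases n <;> omega
    rcases le_or_gt a b with hab | hba
    · -- shear: (a, b - a, a + d - 2*b)
      have ha1 : 1 ≤ a := by nlinarith
      have h2b : 2 * b ≤ a + d := by nlinarith [sq_nonneg (a - d), sq_nonneg (a + d - 2 * b)]
      obtain ⟨l, hl, h1, h2, h3⟩ := IH (n - 1) (by omega) a (b - a) (a + d - 2 * b)
        (by omega) ha (by omega) (by omega) (by nlinarith)
      refine ⟨l.map (fun p => (p.1, p.1 + p.2)), ?_, ?_, ?_, ?_⟩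
      · intro p hp
        obtain ⟨q, hq, rfl⟩ := List.mem_map.mp hp
        obtain ⟨hq1, hq2⟩ := hl q hq
        exact ⟨hq1, by positivity⟩
      · rw [List.map_map]
        simpa [Function.comp_def] using h1
      · rw [List.map_map]
        have : ((fun p : ℤ × ℤ => p.1 * p.2) ∘ fun p => (p.1, p.1 + p.2)) =
            fun p : ℤ × ℤ => p.1 * p.1 + p.1 * p.2 := by
          funext p; simp; ring
        rw [this, sum_map_add_aux, h1, h2]; ring
      · rw [List.map_map]
        have : ((fun p : ℤ × ℤ => p.2 * p.2) ∘ fun p => (p.1, p.1 + p.2)) =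
            fun p : ℤ × ℤ => p.1 * p.1 + (p.1 * p.2 + (p.1 * p.2 + p.2 * p.2)) := by
          funext p; simp; ring
        rw [this, sum_map_add_aux, sum_map_add_aux, sum_map_add_aux, h1, h2, h3]; ring
    · rcases le_or_gt d b with hdb | hbd
      · -- shear other side: (a + d - 2*b, b - d, d)
        have hd1 : 1 ≤ d := by nlinarith
        have h2b : 2 * b ≤ a + d := by nlinarith [sq_nonneg (a - d), sq_nonneg (a + d - 2 * b)]
        obtain ⟨l, hl, h1, h2, h3⟩ := IH (n - 1) (by omega) (a + d - 2 * b) (b - d) d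
          (by omega) (by omega) (by omega) hd (by nlinarith)
        refine ⟨l.map (fun p => (p.1 + p.2, p.2)), ?_, ?_, ?_, ?_⟩
        · intro p hp
          obtain ⟨q, hq, rfl⟩ := List.mem_map.mp hp
          obtain ⟨hq1, hq2⟩ := hl q hq
          exact ⟨by positivity, hq2⟩
        · rw [List.map_map]
          have : ((fun p : ℤ × ℤ => p.1 * p.1) ∘ fun p => (p.1 + p.2, p.2)) =
              fun p : ℤ × ℤ => p.1 * p.1 + (p.1 * p.2 + (p.1 * p.2 + p.2 * p.2)) := by
            funext p; simp; ring
          rw [this, sum_map_add_aux, sum_map_add_aux, sum_map_add_aux, h1, h2, h3]; ring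
        · rw [List.map_map]
          have : ((fun p : ℤ × ℤ => p.1 * p.2) ∘ fun p => (p.1 + p.2, p.2)) =
              fun p : ℤ × ℤ => p.1 * p.2 + p.2 * p.2 := by
            funext p; simp; ring
          rw [this, sum_map_add_aux, h2, h3]; ring
        · rw [List.map_map]
          simpa [Function.comp_def] using h3
      · -- b < a and b < d : subtract (1,1)
        obtain ⟨l, hl, h1, h2, h3⟩ := IH (n - 1) (by omega) (a - 1) (b - 1) (d - 1)
          (by omega) (by omega) (by omega) (by omega) (by nlinarith)
        refine ⟨(1, 1) :: l, ?_, ?_, ?_, ?_⟩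
        · intro p hp
          rcases List.mem_cons.mp hp with rfl | hp
          · norm_num
          · exact hl p hp
        · simp [h1]
        · simp [h2]
        · simp [h3]

theorem integral_cp_factorization_two_by_two
    (A : Matrix (Fin 2) (Fin 2) ℤ) (hA : A.IsSymm)
    (hnn : ∀ i j, 0 ≤ A i j)
    (hcp : ∃ (m : ℕ) (α : Fin m → ℝ) (y : Fin m → Fin 2 → ℝ),
      (∀ i, 0 ≤ α i) ∧ (∀ i j, 0 ≤ y i j) ∧
      A.map (Int.cast : ℤ → ℝ) = ∑ i, α i • vecMulVec (y i) (y i)) :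
    ∃ (m : ℕ) (x : Fin m → Fin 2 → ℤ),
      (∀ i j, 0 ≤ x i j) ∧ A = ∑ i, vecMulVec (x i) (x i) := by
  obtain ⟨m, α, y, hα, hy, heq⟩ := hcp
  set a := A 0 0 with ha_def
  set b := A 0 1 with hb_def
  set d := A 1 1 with hd_def
  have hsymm : A 1 0 = b := by
    rw [hb_def, ← hA.apply 0 1]
  -- entrywise equations over ℝ
  have entry : ∀ i j : Fin 2, ((A i j : ℤ) : ℝ) = ∑ k, α k * (y k i * y k j) := by
    intro i j
    have := congrFun (congrFun heq i) j
    simpa [Matrix.map_apply, Matrix.sum_apply, Matrix.smul_apply, vecMulVec_apply] using this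
  -- Cauchy-Schwarz gives b^2 ≤ a*d
  have hdet : b * b ≤ a * d := by
    have cs := Finset.sum_mul_sq_le_sq_mul_sq Finset.univ
      (fun k => Real.sqrt (α k) * y k 0) (fun k => Real.sqrt (α k) * y k 1)
    have e00 := entry 0 0
    have e01 := entry 0 1
    have e11 := entry 1 1
    have key : ∀ k i j, Real.sqrt (α k) * y k i * (Real.sqrt (α k) * y k j)
        = α k * (y k i * y k j) := by
      intro k i j
      rw [show Real.sqrt (α k) * y k i * (Real.sqrt (α k) * y k j)
          = Real.sqrt (α k) * Real.sqrt (α k) * (y k i * y k j) by ring,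
        Real.mul_self_sqrt (hα k)]
    have hr : ((b : ℤ) : ℝ) ^ 2 ≤ ((a : ℤ) : ℝ) * ((d : ℤ) : ℝ) := by
      rw [e00, e01, e11]
      calc (∑ k, α k * (y k 0 * y k 1)) ^ 2
          = (∑ k, Real.sqrt (α k) * y k 0 * (Real.sqrt (α k) * y k 1)) ^ 2 := by
            congr 1; exact Finset.sum_congr rfl fun k _ => (key k 0 1).symm
        _ ≤ (∑ k, (Real.sqrt (α k) * y k 0) ^ 2) * ∑ k, (Real.sqrt (α k) * y k 1) ^ 2 := cs
        _ = (∑ k, α k * (y k 0 * y k 0)) * ∑ k, α k * (y k 1 * y k 1) := by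
            congr 1 <;> exact Finset.sum_congr rfl fun k _ => by
              rw [sq]; exact key k _ _
    have : (b : ℝ) * b ≤ (a : ℝ) * d := by push_cast at hr ⊢; nlinarith [hr]
    exact_mod_cast this
  have ha : 0 ≤ a := hnn 0 0
  have hb : 0 ≤ b := hnn 0 1
  have hd : 0 ≤ d := hnn 1 1
  obtain ⟨l, hl, h1, h2, h3⟩ := key_lemma (a + b + d).toNat a b d
    (by rw [Int.toNat_of_nonneg (by omega)]) ha hb hd hdet
  refine ⟨l.length, fun i => ![(l.get i).1, (l.get i).2], ?_, ?_⟩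
  · intro i j
    fin_cases j
    · exact (hl _ (l.get_mem _)).1
    · exact (hl _ (l.get_mem _)).2
  · have s00 : (∑ k : Fin l.length, (l.get k).1 * (l.get k).1) = a := by
      exact (fin_sum_list l fun p => p.1 * p.1).trans h1
    have s01 : (∑ k : Fin l.length, (l.get k).1 * (l.get k).2) = b := by
      exact (fin_sum_list l fun p => p.1 * p.2).trans h2
    have s10 : (∑ k : Fin l.length, (l.get k).2 * (l.get k).1) = b := by
      rw [← s01]; exact Finset.sum_congr rfl fun k _ => mul_comm _ _
    have s11 : (∑ k : Fin l.length, (l.get k).2 * (l.get k).2) = d := by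
      exact (fin_sum_list l fun p => p.2 * p.2).trans h3
    ext i j
    rw [Matrix.sum_apply]
    fin_cases i <;> fin_cases j <;>
      simp only [Fin.zero_eta, Fin.mk_one, vecMulVec_apply, Matrix.cons_val_zero,
        Matrix.cons_val_one, Matrix.head_cons]
    · exact s00.symm
    · exact s01.symm
    · rw [hsymm]; exact s10.symm
    · exact s11.symm
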